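/- arXiv:1907.02399 — 4 statements merged into one kernel-verified Lean document; each statement's English description precedes it below -/
import Mathlib

section
/- Let f : ℝⁿ → ℝⁿ be a set-valued map that is upper semicontinuous with nonempty compact convex values, and let x* ∈ ℝⁿ. Suppose f is bounded by M on the closed ball of radius ρ̂ around x*, and set ρ̄ = ρ̂/(M+2). Then for any x with |x−x*| + |t| ≤ ρ̄ and any absolutely continuous curve ξ : [0∧t, 0∨t] → ℝⁿ with ξ(0) = x and ξ'(s) ∈ f(ξ(s)) for a.e. s, one has |ξ(s) − x*| ≤ (M+1)(|s| + |x−x*|) for all s in the interval. -/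
/-! While `ξ` stays in the closed ball of radius `ρ̂` around `x*` its speed is at most `M`, so
`‖ξ s - x*‖ ≤ ‖x - x*‖ + M |s|`. Since `‖x - x*‖ + M |t| ≤ (M + 1) ρ̂ / (M + 2) < ρ̂`, this bound
keeps `ξ` strictly inside the ball, and a continuity argument (the set of times where the bound
holds is closed and open to the right) shows it holds on the whole interval. Negative times are
reduced to positive ones by reversing time. -/

open Metric Set MeasureTheory
open scoped ENNReal Topology

/-- A set-valued vector field of class C^{-1,1}: upper semicontinuous with nonempty compact
convex values. -/
def C11Field {n : ℕ} (f : EuclideanSpace ℝ (Fin n) → Set (EuclideanSpace ℝ (Fin n))) : Prop :=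
  ∀ x, (f x).Nonempty ∧ IsCompact (f x) ∧ Convex ℝ (f x) ∧
    ∀ ε > (0 : ℝ), ∃ δ > (0 : ℝ), ∀ y, ‖y - x‖ < δ → f y ⊆ Metric.thickening ε (f x)

/-- `ξ` is an (absolutely continuous) integral curve of the set-valued field `f` on the time
interval between `0` and `t`, with a.e. derivative `v` satisfying the differential
inclusion `v s ∈ f (ξ s)`. -/
def IsSolutionOn {n : ℕ} (f : EuclideanSpace ℝ (Fin n) → Set (EuclideanSpace ℝ (Fin n)))
    (ξ v : ℝ → EuclideanSpace ℝ (Fin n)) (t : ℝ) : Prop :=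
  IntervalIntegrable v volume 0 t ∧
  (∀ s ∈ Set.uIcc (0 : ℝ) t, ξ s = ξ 0 + ∫ τ in (0 : ℝ)..s, v τ) ∧
  (∀ᵐ s ∂volume, s ∈ Set.uIcc (0 : ℝ) t → v s ∈ f (ξ s))

open Filter intervalIntegral

section APriori

variable {E : Type*} [NormedAddCommGroup E] [NormedSpace ℝ E] {ξ v : ℝ → E} {c : E} {M R t : ℝ}

lemma continuousOn_of_eq_add_integral (hv : IntervalIntegrable v volume 0 t)
    (hξ : ∀ s ∈ uIcc 0 t, ξ s = ξ 0 + ∫ τ in 0..s, v τ) : ContinuousOn ξ (uIcc 0 t) :=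
  (continuousOn_const.add (continuousOn_primitive_interval' hv left_mem_uIcc)).congr hξ

lemma sub_eq_integral_of_eq_add_integral (hv : IntervalIntegrable v volume 0 t)
    (hξ : ∀ s ∈ uIcc 0 t, ξ s = ξ 0 + ∫ τ in 0..s, v τ) {a b : ℝ} (ha : a ∈ uIcc 0 t)
    (hb : b ∈ uIcc 0 t) : ξ b - ξ a = ∫ τ in a..b, v τ := by
  rw [hξ b hb, hξ a ha, add_sub_add_left_eq_sub,
    integral_interval_sub_left (hv.mono_set (uIcc_subset_uIcc left_mem_uIcc hb))
      (hv.mono_set (uIcc_subset_uIcc left_mem_uIcc ha))]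

theorem norm_sub_le_add_mul_of_eq_add_integral (hM : 0 ≤ M) (ht : 0 ≤ t)
    (hR : ‖ξ 0 - c‖ + M * t < R) (hv : IntervalIntegrable v volume 0 t)
    (hξ : ∀ s ∈ uIcc 0 t, ξ s = ξ 0 + ∫ τ in 0..s, v τ)
    (hvM : ∀ᵐ s, s ∈ uIcc 0 t → ‖ξ s - c‖ ≤ R → ‖v s‖ ≤ M) :
    ∀ s ∈ Icc 0 t, ‖ξ s - c‖ ≤ ‖ξ 0 - c‖ + M * s := by
  set C := ‖ξ 0 - c‖
  have hcont := continuousOn_of_eq_add_integral hv hξ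
  rw [uIcc_of_le ht] at hcont hvM
  have hclosed : IsClosed ({s | ‖ξ s - c‖ ≤ C + M * s} ∩ Icc 0 t) := by
    rw [inter_comm]
    exact isClosed_Icc.isClosed_le (hcont.sub continuousOn_const).norm (by fun_prop)
  refine hclosed.Icc_subset_of_forall_mem_nhdsWithin (by simp [C]) ?_
  rintro s ⟨hsC, hs0, hst⟩
  have hsR : ‖ξ s - c‖ < R := hsC.trans_lt (lt_of_le_of_lt (by gcongr) hR)
  have hIcc : Icc 0 t ∈ 𝓝[>] s :=
    mem_of_superset (Ioo_mem_nhdsGT hst) (Ioo_subset_Icc_self.trans (Icc_subset_Icc_left hs0))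
  have hball : ∀ᶠ σ in 𝓝[>] s, ‖ξ σ - c‖ < R ∧ σ ∈ Icc 0 t :=
    ((((hcont s ⟨hs0, hst.le⟩).mono_of_mem_nhdsWithin hIcc).sub_const c).norm.eventually_lt_const
      hsR).and hIcc
  obtain ⟨u, hsu, hu⟩ := mem_nhdsGT_iff_exists_Ioo_subset.mp hball
  filter_upwards [Ioo_mem_nhdsGT hsu] with σ hσ
  have hincr : ‖ξ σ - ξ s‖ ≤ M * (σ - s) := by
    rw [sub_eq_integral_of_eq_add_integral hv hξ (by rw [uIcc_of_le ht]; exact ⟨hs0, hst.le⟩)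
      (by rw [uIcc_of_le ht]; exact (hu hσ).2), ← abs_of_pos (sub_pos.2 hσ.1)]
    refine norm_integral_le_of_norm_le_const_ae ?_
    filter_upwards [hvM] with τ hτ hτσ
    rw [uIoc_of_le hσ.1.le] at hτσ
    obtain ⟨hτR, hτt⟩ := hu ⟨hτσ.1, hτσ.2.trans_lt hσ.2⟩
    exact hτ hτt hτR.le
  calc ‖ξ σ - c‖ = ‖(ξ s - c) + (ξ σ - ξ s)‖ := by rw [sub_add_sub_cancel']
    _ ≤ (C + M * s) + M * (σ - s) := (norm_add_le _ _).trans (add_le_add hsC hincr)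
    _ = C + M * σ := by ring

lemma neg_mem_uIcc_zero_iff {s t : ℝ} : -s ∈ uIcc 0 t ↔ s ∈ uIcc 0 (-t) := by
  simp only [mem_uIcc]
  grind

lemma comp_neg_of_eq_add_integral (hv : IntervalIntegrable v volume 0 t)
    (hξ : ∀ s ∈ uIcc 0 t, ξ s = ξ 0 + ∫ τ in 0..s, v τ) :
    IntervalIntegrable (fun s ↦ -v (-s)) volume 0 (-t) ∧
      ∀ s ∈ uIcc 0 (-t), ξ (-s) = ξ (-0) + ∫ τ in 0..s, -v (-τ) := by
  refine ⟨neg_zero (G := ℝ) ▸ ((IntervalIntegrable.iff_comp_neg).mp hv).neg, fun s hs ↦ ?_⟩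
  rw [intervalIntegral.integral_neg, integral_comp_neg, integral_symm, neg_neg, neg_zero]
  exact hξ (-s) (neg_mem_uIcc_zero_iff.mpr hs)

theorem norm_sub_le_add_mul_abs_of_eq_add_integral (hM : 0 ≤ M)
    (hR : ‖ξ 0 - c‖ + M * |t| < R) (hv : IntervalIntegrable v volume 0 t)
    (hξ : ∀ s ∈ uIcc 0 t, ξ s = ξ 0 + ∫ τ in 0..s, v τ)
    (hvM : ∀ᵐ s, s ∈ uIcc 0 t → ‖ξ s - c‖ ≤ R → ‖v s‖ ≤ M) :
    ∀ s ∈ uIcc 0 t, ‖ξ s - c‖ ≤ ‖ξ 0 - c‖ + M * |s| := by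
  intro s hs
  rcases le_total 0 t with ht | ht
  · rw [uIcc_of_le ht] at hs
    rw [abs_of_nonneg hs.1]
    exact norm_sub_le_add_mul_of_eq_add_integral hM ht (by rwa [abs_of_nonneg ht] at hR) hv hξ
      hvM s hs
  · obtain ⟨hv', hξ'⟩ := comp_neg_of_eq_add_integral hv hξ
    have hvM' : ∀ᵐ s, s ∈ uIcc 0 (-t) → ‖ξ (-s) - c‖ ≤ R → ‖-v (-s)‖ ≤ M := by
      filter_upwards [(Measure.measurePreserving_neg volume).quasiMeasurePreserving.ae hvM]
        with s hs
      simpa only [norm_neg, ← neg_mem_uIcc_zero_iff] using hs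
    rw [uIcc_of_ge ht] at hs
    have := norm_sub_le_add_mul_of_eq_add_integral hM (neg_nonneg.2 ht)
      (by rwa [neg_zero, ← abs_of_nonpos ht]) hv' hξ' hvM' (-s) ⟨neg_nonneg.2 hs.2, neg_le_neg hs.1⟩
    rwa [neg_neg, neg_zero, ← abs_of_nonpos hs.2] at this

end APriori

theorem stmt_0_general {n : ℕ} (f : EuclideanSpace ℝ (Fin n) → Set (EuclideanSpace ℝ (Fin n)))
    (xstar : EuclideanSpace ℝ (Fin n))
    (M ρhat : ℝ) (hM : 0 ≤ M) (hρ : 0 < ρhat)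
    (hbound : ∀ y, ‖y - xstar‖ ≤ ρhat → ∀ w ∈ f y, ‖w‖ ≤ M)
    (x : EuclideanSpace ℝ (Fin n)) (t : ℝ) (hxt : ‖x - xstar‖ + |t| ≤ ρhat / (M + 2))
    (ξ v : ℝ → EuclideanSpace ℝ (Fin n)) (hξ0 : ξ 0 = x) (hsol : IsSolutionOn f ξ v t) :
    ∀ s ∈ Set.uIcc (0 : ℝ) t, ‖ξ s - xstar‖ ≤ (M + 1) * (|s| + ‖x - xstar‖) := by
  obtain ⟨hv, hξ, hvf⟩ := hsol
  subst hξ0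
  have hR : ‖ξ 0 - xstar‖ + M * |t| < ρhat :=
    calc ‖ξ 0 - xstar‖ + M * |t| ≤ (M + 1) * (‖ξ 0 - xstar‖ + |t|) := by
          nlinarith [norm_nonneg (ξ 0 - xstar), abs_nonneg t]
      _ ≤ (M + 1) * (ρhat / (M + 2)) := by gcongr
      _ < ρhat := by
          rw [← mul_div_assoc, div_lt_iff₀ (by linarith)]
          nlinarith
  intro s hs
  have := norm_sub_le_add_mul_abs_of_eq_add_integral hM hR hv hξ
    (hvf.mono fun s hvs hs hball ↦ hbound _ hball _ (hvs hs)) s hs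
  nlinarith [abs_nonneg s, norm_nonneg (ξ 0 - xstar)]

/-- if the C^{-1,1} set-valued field f is bounded by M on the closed ball of
radius ρ̂ around x*, ρ̄ = ρ̂/(M+2), and |x − x*| + |t| ≤ ρ̄, then every integral curve ξ of f
with ξ(0) = x stays in the region ‖ξ(s) − x*‖ ≤ (M+1)(|s| + ‖x − x*‖) for s between 0 and t. -/
theorem stmt_0 {n : ℕ} (f : EuclideanSpace ℝ (Fin n) → Set (EuclideanSpace ℝ (Fin n)))
    (hf : C11Field f) (xstar : EuclideanSpace ℝ (Fin n))
    (M ρhat : ℝ) (hM : 0 ≤ M) (hρ : 0 < ρhat)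
    (hbound : ∀ y, ‖y - xstar‖ ≤ ρhat → ∀ w ∈ f y, ‖w‖ ≤ M)
    (x : EuclideanSpace ℝ (Fin n)) (t : ℝ) (hxt : ‖x - xstar‖ + |t| ≤ ρhat / (M + 2))
    (ξ v : ℝ → EuclideanSpace ℝ (Fin n)) (hξ0 : ξ 0 = x) (hsol : IsSolutionOn f ξ v t) :
    ∀ s ∈ Set.uIcc (0 : ℝ) t, ‖ξ s - xstar‖ ≤ (M + 1) * (|s| + ‖x - xstar‖) :=
  stmt_0_general f xstar M ρhat hM hρ hbound x t hxt ξ v hξ0 hsol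
end

section
/- Let f₁, …, f_m be upper semicontinuous set-valued vector fields on ℝⁿ with nonempty compact convex values and let x* ∈ ℝⁿ. If y belongs to the composition of the flows ψ^{f₁}_{s₁} ∘ ⋯ ∘ ψ^{f_m}_{s_m}(x) with s₁,…,s_m ≥ 0 and t = s₁+⋯+s_m, then dist( y − x, Σᵢ sᵢ fᵢ(x*) ) = t·γ(O(t + |x−x*|)) as t + |x−x*| → 0, where γ is the sum of the upper semicontinuity moduli of the fᵢ at x*. -/
open Metric Set MeasureTheory
open scoped ENNReal Topology

/-- A chain of integral curves: `y` is reached from `x` by following the set-valued fields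
`f 0, …, f (m-1)` for the respective (nonnegative) times `s 0, …, s (m-1)`, i.e.
`y ∈ ψ^{f_m}_{s_m} ∘ ⋯ ∘ ψ^{f_1}_{s_1}(x)`. -/
def FlowChain {n m : ℕ} (f : Fin m → EuclideanSpace ℝ (Fin n) → Set (EuclideanSpace ℝ (Fin n)))
    (s : Fin m → ℝ) (x y : EuclideanSpace ℝ (Fin n)) : Prop :=
  ∃ z : Fin (m + 1) → EuclideanSpace ℝ (Fin n), z 0 = x ∧ z (Fin.last m) = y ∧
    ∀ i : Fin m, ∃ ξ v : ℝ → EuclideanSpace ℝ (Fin n),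
      ξ 0 = z i.castSucc ∧ ξ (s i) = z i.succ ∧ IsSolutionOn (f i) ξ v (s i)
/-!
Near `x*` all fields are bounded by some `M ≥ 1`, so every trajectory of the chain stays within
`ρ = M (t + ‖x - x*‖)` of `x*`, where the velocities of the `i`-th field lie in the closed
`γᵢ(ρ)`-neighbourhood of the compact convex set `fᵢ(x*)`. The mean velocity over a segment lies
in that closed convex neighbourhood, so each increment of the chain is within `sᵢ γᵢ(ρ)` of
`sᵢ fᵢ(x*)`; summing the increments gives the bound.
-/

theorem Fin.partialSum_last {M : Type*} [AddCommMonoid M] {n : ℕ} (f : Fin n → M) :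
    Fin.partialSum f (Fin.last n) = ∑ i, f i := by
  rw [Fin.partialSum, List.take_of_length_le (by simp), List.sum_ofFn]

theorem Fin.partialSum_le_sum {n : ℕ} {f : Fin n → ℝ} (hf : ∀ i, 0 ≤ f i) (k : Fin (n + 1)) :
    Fin.partialSum f k ≤ ∑ i, f i := by
  rw [← List.sum_ofFn]
  exact (List.take_sublist _ _).sum_le_sum (by simpa using hf)

theorem Fin.sum_succ_sub_castSucc {G : Type*} [AddCommGroup G] {n : ℕ} (z : Fin (n + 1) → G) :
    ∑ i : Fin n, (z i.succ - z i.castSucc) = z (Fin.last n) - z 0 := by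
  have := congrFun (Fin.partialSum_left_neg z) (Fin.last n)
  simp only [Pi.vadd_apply, vadd_eq_add, Fin.partialSum_last] at this
  rw [← this]
  simp [sub_eq_neg_add]

theorem dist_le_partialSum_of_chain {X : Type*} [PseudoMetricSpace X] {m : ℕ}
    {z : Fin (m + 1) → X} {b : Fin m → ℝ} {c : X} {δ : ℝ}
    (hδ : ∀ k, dist (z 0) c + Fin.partialSum b k < δ)
    (hstep : ∀ i, dist (z i.castSucc) c + b i < δ → dist (z i.succ) (z i.castSucc) ≤ b i)
    (k : Fin (m + 1)) : dist (z k) (z 0) ≤ Fin.partialSum b k := by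
  induction k using Fin.induction with
  | zero => simp
  | succ i ih =>
    have hi : dist (z i.castSucc) c + b i < δ := by
      have := hδ i.succ
      rw [Fin.partialSum_succ] at this
      linarith [dist_triangle (z i.castSucc) (z 0) c]
    calc dist (z i.succ) (z 0) ≤ dist (z i.succ) (z i.castSucc) + dist (z i.castSucc) (z 0) :=
          dist_triangle _ _ _
      _ ≤ b i + Fin.partialSum b i.castSucc := add_le_add (hstep i hi) ih
      _ = Fin.partialSum b i.succ := by rw [Fin.partialSum_succ, add_comm]

section IntegralCurve

variable {E : Type*} [NormedAddCommGroup E] [NormedSpace ℝ E] {ξ v : ℝ → E} {s : ℝ}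

theorem norm_sub_le_of_eq_add_integral (hint : IntervalIntegrable v volume 0 s)
    (hξ : ∀ σ ∈ Icc 0 s, ξ σ = ξ 0 + ∫ τ in (0 : ℝ)..σ, v τ) {a b M : ℝ} (ha : 0 ≤ a)
    (hab : a ≤ b) (hb : b ≤ s) (hv : ∀ᵐ σ, σ ∈ Ioc a b → ‖v σ‖ ≤ M) :
    ‖ξ b - ξ a‖ ≤ M * (b - a) := by
  have hint' : ∀ c ∈ Icc 0 s, IntervalIntegrable v volume 0 c := fun c hc =>
    hint.mono_set (uIcc_subset_uIcc_left (Icc_subset_uIcc hc))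
  rw [hξ b ⟨ha.trans hab, hb⟩, hξ a ⟨ha, hab.trans hb⟩, add_sub_add_left_eq_sub,
    intervalIntegral.integral_interval_sub_left (hint' b ⟨ha.trans hab, hb⟩)
      (hint' a ⟨ha, hab.trans hb⟩)]
  simpa [mul_comm] using intervalIntegral.norm_integral_le_of_norm_le hab hv
    (intervalIntegrable_const (c := M))

theorem norm_sub_le_mul_of_norm_le_near {c : E} {M δ : ℝ} (hM : 0 ≤ M)
    (hint : IntervalIntegrable v volume 0 s)
    (hξ : ∀ σ ∈ Icc 0 s, ξ σ = ξ 0 + ∫ τ in (0 : ℝ)..σ, v τ)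
    (hv : ∀ᵐ σ, σ ∈ Icc 0 s → ‖ξ σ - c‖ < δ → ‖v σ‖ ≤ M)
    (hδ : ‖ξ 0 - c‖ + M * s < δ) :
    ∀ τ ∈ Icc 0 s, ‖ξ τ - ξ 0‖ ≤ M * τ := by
  have hcont : ContinuousOn ξ (Icc 0 s) :=
    (continuousOn_const.add ((intervalIntegral.continuousOn_primitive_interval' hint
      left_mem_uIcc).mono Icc_subset_uIcc)).congr hξ
  -- Continuity induction: while the bound holds, `ξ` is still in the ball where `‖v‖ ≤ M`.
  refine IsClosed.Icc_subset_of_forall_exists_gt (s := {τ | ‖ξ τ - ξ 0‖ ≤ M * τ}) ?_ (by simp) ?_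
  · rw [inter_comm]
    exact isClosed_Icc.isClosed_le (hcont.sub continuousOn_const).norm
      (continuousOn_const.mul continuousOn_id)
  rintro τ ⟨hτS, hτ0, hτs⟩ y hy
  have hnear : ∀ᶠ σ in 𝓝[≥] τ, σ ∈ Icc 0 s ∧ ‖ξ σ - c‖ < δ := by
    have hIcc : Icc 0 s ∈ 𝓝[≥] τ :=
      Filter.mem_of_superset (Icc_mem_nhdsGE hτs) (Icc_subset_Icc_left hτ0)
    have hτc : ‖ξ τ - c‖ < δ := by
      have : ‖ξ τ - c‖ ≤ ‖ξ τ - ξ 0‖ + ‖ξ 0 - c‖ := norm_sub_le_norm_sub_add_norm_sub _ _ _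
      have hτS' : ‖ξ τ - ξ 0‖ ≤ M * τ := hτS
      linarith [mul_le_mul_of_nonneg_left hτs.le hM]
    refine (Filter.eventually_mem_set.2 hIcc).and ?_
    exact (((hcont τ ⟨hτ0, hτs.le⟩).mono_of_mem_nhdsWithin hIcc).sub
      continuousWithinAt_const).norm.eventually (eventually_lt_nhds hτc)
  obtain ⟨u, hu, hIco⟩ := mem_nhdsGE_iff_exists_Ico_subset.1 hnear
  set τ' := min (min y s) ((τ + u) / 2)
  have hττ' : τ < τ' := lt_min (lt_min hy hτs) (by linarith [mem_Ioi.1 hu])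
  have hτ's : τ' ≤ s := (min_le_left _ _).trans (min_le_right _ _)
  have hstep : ‖ξ τ' - ξ τ‖ ≤ M * (τ' - τ) := by
    refine norm_sub_le_of_eq_add_integral hint hξ hτ0 hττ'.le hτ's ?_
    filter_upwards [hv] with σ hσ hσI
    have hτ'u : τ' < u := (min_le_right _ _).trans_lt (by linarith [mem_Ioi.1 hu])
    have hσ' := hIco ⟨hσI.1.le, hσI.2.trans_lt hτ'u⟩
    exact hσ hσ'.1 hσ'.2
  refine ⟨τ', ?_, hττ', (min_le_left _ _).trans (min_le_left _ _)⟩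
  calc ‖ξ τ' - ξ 0‖ ≤ ‖ξ τ' - ξ τ‖ + ‖ξ τ - ξ 0‖ := norm_sub_le_norm_sub_add_norm_sub _ _ _
    _ ≤ M * (τ' - τ) + M * τ := add_le_add hstep hτS
    _ = M * τ' := by ring

end IntegralCurve

section ConvexAverage

open scoped Pointwise

variable {E : Type*} [NormedAddCommGroup E] [NormedSpace ℝ E] [CompleteSpace E] {v : ℝ → E}
  {s : ℝ}

theorem intervalIntegral_mem_smul_of_ae_mem {D : Set E} (hD : Convex ℝ D) (hDc : IsClosed D)
    (hne : D.Nonempty) (hs : 0 ≤ s) (hint : IntervalIntegrable v volume 0 s)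
    (hv : ∀ᵐ σ, σ ∈ Ioc 0 s → v σ ∈ D) : (∫ τ in (0 : ℝ)..s, v τ) ∈ s • D := by
  rcases hs.eq_or_lt with rfl | hpos
  · simp [zero_smul_set hne]
  have havg : (⨍ σ in Ioc 0 s, v σ) ∈ D :=
    hD.set_average_mem hDc (by simpa using hpos) (by simp)
      ((ae_restrict_iff' measurableSet_Ioc).2 hv)
      ((intervalIntegrable_iff_integrableOn_Ioc_of_le hs).1 hint)
  refine mem_smul_set.2 ⟨_, havg, ?_⟩
  rw [setAverage_eq, Real.volume_real_Ioc_of_le hs, sub_zero, smul_inv_smul₀ hpos.ne',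
    intervalIntegral.integral_of_le hs]

theorem exists_mem_norm_intervalIntegral_sub_smul_le {C : Set E} (hC : IsCompact C)
    (hCc : Convex ℝ C) (hne : C.Nonempty) {r : ℝ} (hr : 0 ≤ r) (hs : 0 ≤ s)
    (hint : IntervalIntegrable v volume 0 s) (hv : ∀ᵐ σ, σ ∈ Ioc 0 s → v σ ∈ cthickening r C) :
    ∃ u ∈ C, ‖(∫ τ in (0 : ℝ)..s, v τ) - s • u‖ ≤ s * r := by
  obtain ⟨d, hd, hds⟩ := mem_smul_set.1 <| intervalIntegral_mem_smul_of_ae_mem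
    (hCc.cthickening r) isClosed_cthickening (hne.mono (self_subset_cthickening C)) hs hint hv
  rw [hC.cthickening_eq_biUnion_closedBall hr] at hd
  obtain ⟨u, hu, hdu⟩ := mem_iUnion₂.1 hd
  refine ⟨u, hu, ?_⟩
  rw [← hds, ← smul_sub, norm_smul, Real.norm_of_nonneg hs]
  exact mul_le_mul_of_nonneg_left (mem_closedBall_iff_norm.1 hdu) hs

end ConvexAverage

section Modulus

variable {X Y : Type*} [SeminormedAddCommGroup X] [PseudoMetricSpace Y]

noncomputable def uscModulus (F : X → Set Y) (c : X) (ρ : ℝ) : ℝ :=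
  sSup {d : ℝ | ∃ z w, ‖z - c‖ ≤ ρ ∧ w ∈ F z ∧ d = infDist w (F c)}

theorem uscModulus_nonneg (F : X → Set Y) (c : X) (ρ : ℝ) : 0 ≤ uscModulus F c ρ :=
  Real.sSup_nonneg <| by
    rintro _ ⟨z, w, -, -, rfl⟩
    exact infDist_nonneg

theorem mem_cthickening_uscModulus {F : X → Set Y} {c : X} {ρ ε : ℝ} (hne : (F c).Nonempty)
    (hε : ∀ z, ‖z - c‖ ≤ ρ → F z ⊆ thickening ε (F c)) {z : X} {w : Y} (hz : ‖z - c‖ ≤ ρ)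
    (hw : w ∈ F z) : w ∈ cthickening (uscModulus F c ρ) (F c) := by
  have hbdd : BddAbove {d : ℝ | ∃ z w, ‖z - c‖ ≤ ρ ∧ w ∈ F z ∧ d = infDist w (F c)} := by
    refine ⟨ε, ?_⟩
    rintro _ ⟨z, w, hz, hw, rfl⟩
    exact ((mem_thickening_iff_infDist_lt hne).1 (hε z hz hw)).le
  rw [mem_cthickening_iff, ← ENNReal.ofReal_toReal (infEDist_ne_top hne)]
  exact ENNReal.ofReal_le_ofReal (le_csSup hbdd ⟨z, w, hz, hw, rfl⟩)

end Modulus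

theorem exists_locallyBounded_of_C11Field {n : ℕ} {ι : Type*} [Finite ι]
    {f : ι → EuclideanSpace ℝ (Fin n) → Set (EuclideanSpace ℝ (Fin n))}
    (hf : ∀ i, C11Field (f i)) (c : EuclideanSpace ℝ (Fin n)) :
    ∃ δ > 0, ∃ M ≥ 1, ∀ i z, ‖z - c‖ < δ →
      f i z ⊆ thickening 1 (f i c) ∧ ∀ w ∈ f i z, ‖w‖ ≤ M := by
  have hnear : ∀ᶠ z in 𝓝 c, ∀ i, f i z ⊆ thickening 1 (f i c) := by
    refine Filter.eventually_all.2 fun i => ?_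
    obtain ⟨δ, hδ, h⟩ := (hf i c).2.2.2 1 one_pos
    exact Metric.eventually_nhds_iff.2 ⟨δ, hδ, fun z hz => h z (by rwa [← dist_eq_norm])⟩
  obtain ⟨δ, hδ, hball⟩ := Metric.eventually_nhds_iff.1 hnear
  obtain ⟨R, hR⟩ := (Bornology.isBounded_iUnion.2 fun i =>
    (hf i c).2.1.isBounded.thickening (δ := 1)).exists_norm_le
  refine ⟨δ, hδ, max R 1, le_max_right _ _, fun i z hz => ⟨hball (by rwa [dist_eq_norm]) i,
    fun w hw => (hR w (mem_iUnion.2 ⟨i, hball (by rwa [dist_eq_norm]) i hw⟩)).trans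
      (le_max_left _ _)⟩⟩

namespace FlowChain

variable {n m : ℕ} {f : Fin m → EuclideanSpace ℝ (Fin n) → Set (EuclideanSpace ℝ (Fin n))}
  {s : Fin m → ℝ} {x y : EuclideanSpace ℝ (Fin n)}

/-- The a priori speed bound keeps every trajectory of the chain in the closed ball around `c`
of radius `‖x - c‖ + M * ∑ i, s i`, so the fields may be emptied outside it. -/
theorem restrict_closedBall {c : EuclideanSpace ℝ (Fin n)} {M δ : ℝ} (hM : 0 ≤ M)
    (hs : ∀ i, 0 ≤ s i) (hspeed : ∀ i z, ‖z - c‖ < δ → ∀ w ∈ f i z, ‖w‖ ≤ M)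
    (hδ : ‖x - c‖ + M * ∑ i, s i < δ) (h : FlowChain f s x y) :
    FlowChain (fun i z => {w ∈ f i z | ‖z - c‖ ≤ ‖x - c‖ + M * ∑ i, s i}) s x y := by
  obtain ⟨z, rfl, rfl, hseg⟩ := h
  choose ξ v hξ0 hξs hsol using hseg
  have hdisp : ∀ i, ‖z i.castSucc - c‖ + M * s i < δ →
      ∀ τ ∈ Icc 0 (s i), ‖ξ i τ - z i.castSucc‖ ≤ M * τ := by
    intro i hi
    obtain ⟨hint, hξ, hv⟩ := hsol i
    rw [uIcc_of_le (hs i)] at hξ hv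
    rw [← hξ0 i] at hi ⊢
    refine norm_sub_le_mul_of_norm_le_near hM hint hξ ?_ hi
    filter_upwards [hv] with σ hσ hσI hnear using hspeed i _ hnear _ (hσ hσI)
  have hpartial : ∀ k, Fin.partialSum (fun i => M * s i) k ≤ M * ∑ i, s i := fun k =>
    (Fin.partialSum_le_sum (fun i => mul_nonneg hM (hs i)) k).trans_eq (Finset.mul_sum _ _ _).symm
  have hz : ∀ k, dist (z k) (z 0) ≤ Fin.partialSum (fun i => M * s i) k := by
    refine dist_le_partialSum_of_chain (c := c) (δ := δ) (fun k => ?_) fun i hi => ?_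
    · rw [dist_eq_norm]
      linarith [hpartial k]
    · simpa [dist_eq_norm, hξs] using hdisp i (by rwa [← dist_eq_norm]) (s i) ⟨hs i, le_rfl⟩
  have hmargin : ∀ i, ‖z i.castSucc - c‖ + M * s i ≤ ‖z 0 - c‖ + M * ∑ i, s i := by
    intro i
    have hzi := hz i.castSucc
    have hpi := hpartial i.succ
    rw [dist_eq_norm] at hzi
    rw [Fin.partialSum_succ] at hpi
    linarith [norm_sub_le_norm_sub_add_norm_sub (z i.castSucc) (z 0) c]
  refine ⟨z, rfl, rfl, fun i => ⟨ξ i, v i, hξ0 i, hξs i, (hsol i).1, (hsol i).2.1, ?_⟩⟩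
  filter_upwards [(hsol i).2.2] with σ hσ hσI
  refine ⟨hσ hσI, ?_⟩
  rw [uIcc_of_le (hs i)] at hσI
  have hξσ := hdisp i ((hmargin i).trans_lt hδ) σ hσI
  linarith [norm_sub_le_norm_sub_add_norm_sub (ξ i σ) (z i.castSucc) c, hmargin i,
    mul_le_mul_of_nonneg_left hσI.2 hM]

theorem infDist_sub_le {C : Fin m → Set (EuclideanSpace ℝ (Fin n))} {r : Fin m → ℝ}
    (hC : ∀ i, IsCompact (C i)) (hCc : ∀ i, Convex ℝ (C i)) (hne : ∀ i, (C i).Nonempty)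
    (hr : ∀ i, 0 ≤ r i) (hf : ∀ i z, f i z ⊆ cthickening (r i) (C i)) (hs : ∀ i, 0 ≤ s i)
    (h : FlowChain f s x y) :
    infDist (y - x) {w | ∃ u : Fin m → EuclideanSpace ℝ (Fin n),
      (∀ i, u i ∈ C i) ∧ w = ∑ i, s i • u i} ≤ ∑ i, s i * r i := by
  obtain ⟨z, rfl, rfl, hseg⟩ := h
  have hstep : ∀ i, ∃ u ∈ C i, ‖z i.succ - z i.castSucc - s i • u‖ ≤ s i * r i := by
    intro i
    obtain ⟨ξ, v, hξ0, hξs, hint, hξ, hv⟩ := hseg i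
    rw [← hξ0, ← hξs, hξ (s i) right_mem_uIcc, add_sub_cancel_left]
    refine exists_mem_norm_intervalIntegral_sub_smul_le (hC i) (hCc i) (hne i) (hr i) (hs i) hint ?_
    filter_upwards [hv] with σ hσ hσI
    exact hf i _ (hσ (Icc_subset_uIcc (Ioc_subset_Icc_self hσI)))
  choose u hu hest using hstep
  refine (infDist_le_dist_of_mem (mem_ofPred.2 ⟨u, hu, rfl⟩)).trans ?_
  calc dist (z (Fin.last m) - z 0) (∑ i, s i • u i)
    _ = ‖∑ i, (z i.succ - z i.castSucc - s i • u i)‖ := by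
        rw [dist_eq_norm, Finset.sum_sub_distrib, Fin.sum_succ_sub_castSucc]
    _ ≤ ∑ i, s i * r i := (norm_sum_le _ _).trans (Finset.sum_le_sum fun i _ => hest i)

end FlowChain

/-- for C^{-1,1} set-valued fields f₁,…,f_m and any point y of the composed
multiflow ψ^{f₁}_{s₁} ∘ ⋯ ∘ ψ^{f_m}_{s_m}(x) with sᵢ ≥ 0 and t = Σ sᵢ, one has
dist(y − x, Σᵢ sᵢ fᵢ(x*)) ≤ t γ(K(t + |x − x*|)) for t + |x − x*| small, where γ is the sum
of the upper semicontinuity moduli of the fᵢ at x*. -/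
theorem stmt_2 {n m : ℕ}
    (f : Fin m → EuclideanSpace ℝ (Fin n) → Set (EuclideanSpace ℝ (Fin n)))
    (hf : ∀ i, C11Field (f i)) (xstar : EuclideanSpace ℝ (Fin n))
    (γ : ℝ → ℝ)
    (hγ : ∀ ρ : ℝ, γ ρ = ∑ i : Fin m, sSup {d : ℝ | ∃ z w, ‖z - xstar‖ ≤ ρ ∧ w ∈ f i z ∧
      d = Metric.infDist w (f i xstar)}) :
    ∃ K : ℝ, 0 ≤ K ∧ ∃ δ > (0 : ℝ),
      ∀ (s : Fin m → ℝ) (x y : EuclideanSpace ℝ (Fin n)), (∀ i, 0 ≤ s i) →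
        (∑ i, s i) + ‖x - xstar‖ ≤ δ → FlowChain f s x y →
        Metric.infDist (y - x)
            {w : EuclideanSpace ℝ (Fin n) | ∃ vv : Fin m → EuclideanSpace ℝ (Fin n),
              (∀ i, vv i ∈ f i xstar) ∧ w = ∑ i, s i • vv i} ≤
          (∑ i, s i) * γ (K * ((∑ i, s i) + ‖x - xstar‖)) := by
  obtain ⟨δ, hδ, M, hM, hnear⟩ := exists_locallyBounded_of_C11Field hf xstar
  refine ⟨M, by positivity, δ / (2 * M), by positivity, fun s x y hs hsmall h => ?_⟩
  set t := ∑ i, s i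
  set ρ := M * (t + ‖x - xstar‖)
  have hρ : ρ < δ := calc
    ρ ≤ M * (δ / (2 * M)) := mul_le_mul_of_nonneg_left hsmall (by positivity)
    _ = δ / 2 := by field_simp
    _ < δ := half_lt_self hδ
  have hxρ : ‖x - xstar‖ + M * t ≤ ρ := by
    nlinarith [norm_nonneg (x - xstar)]
  have hloc := h.restrict_closedBall (by positivity) hs (fun i z hz => (hnear i z hz).2)
    (hxρ.trans_lt hρ)
  rw [hγ, Finset.mul_sum]
  refine (hloc.infDist_sub_le (fun i => (hf i xstar).2.1) (fun i => (hf i xstar).2.2.1)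
    (fun i => (hf i xstar).1) (fun i => uscModulus_nonneg (f i) xstar ρ) ?_ hs).trans ?_
  · rintro i z w ⟨hw, hz⟩
    exact mem_cthickening_uscModulus (hf i xstar).1
      (fun z hz => (hnear i z (hz.trans_lt hρ)).1) (hz.trans hxρ) hw
  · exact Finset.sum_le_sum fun i _ => mul_le_mul_of_nonneg_right
      (Finset.single_le_sum (fun j _ => hs j) (Finset.mem_univ i)) (uscModulus_nonneg _ _ _)
end

section
/- Let n be a unit vector in ℝⁿ, 0 < θ' < θ ≤ π, and suppose x, ξ̄ ∈ ℝⁿ are such that (x − ξ̄)·w ≤ 0 for all w in the closure of C_θ(n). Then for every v ∈ C_{θ'}(n), the unit vector (x − ξ̄)/|x − ξ̄| satisfies ((x−ξ̄)/|x−ξ̄|) · v ≤ − sin((θ − θ')/2) |v|. -/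
open Real InnerProductGeometry Filter Topology
open scoped RealInnerProductSpace

/-!
The hypothesis says that `x - ξbar` lies in the dual of the closed cone of half-opening `θ / 2`
around `n`, i.e. in the closed cone of half-opening `π / 2 - θ / 2` around `-n`; in terms of
angles, `∠(x - ξbar, n) ≥ π / 2 + θ / 2`. A vector `v` of the smaller cone has `∠(v, n) < θ' / 2`,
so the triangle inequality for angles gives `∠(x - ξbar, v) ≥ π / 2 + (θ - θ') / 2`, and the cosine
of that angle is at most `-sin ((θ - θ') / 2)`.
-/

lemma le_neg_of_mul_add_mul_nonpos {c t S C : ℝ} (hc : c ≤ 0) (ht : 0 ≤ t)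
    (ht2 : t ^ 2 = 1 - c ^ 2) (hC : 0 ≤ C) (hSC : S ^ 2 + C ^ 2 = 1)
    (h : t * (c * C + t * S) ≤ 0) : c ≤ -S := by
  by_contra! hcS
  have hCt : C < t := by nlinarith
  have hpos : 0 < c * C + t * S := by
    nlinarith [mul_lt_mul_of_pos_right hCt (by linarith : 0 < S),
      mul_nonneg hC (by linarith : 0 ≤ S + c)]
  nlinarith [mul_pos (hC.trans_lt hCt) hpos]

variable {V : Type*} [NormedAddCommGroup V] [InnerProductSpace ℝ V]

lemma setOf_norm_mul_le_inner_subset_closure {n : V} {c : ℝ} (hn : ‖n‖ = 1) (hc0 : 0 ≤ c)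
    (hc1 : c < 1) : {h : V | ‖h‖ * c ≤ ⟪h, n⟫} ⊆ closure {h : V | ‖h‖ * c < ⟪h, n⟫} := by
  intro w (hw : ‖w‖ * c ≤ ⟪w, n⟫)
  have hlim : Tendsto (fun ε : ℝ => w + ε • n) (𝓝[>] 0) (𝓝 w) :=
    tendsto_nhdsWithin_of_tendsto_nhds <|
      (by fun_prop : Continuous fun ε : ℝ => w + ε • n).tendsto' 0 w (by simp)
  refine mem_closure_of_tendsto hlim (eventually_nhdsWithin_of_forall fun ε (hε : 0 < ε) => ?_)
  have hnorm : ‖w + ε • n‖ ≤ ‖w‖ + ε := by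
    simpa [norm_smul, hn, abs_of_pos hε] using norm_add_le w (ε • n)
  have hinner : ⟪w + ε • n, n⟫ = ⟪w, n⟫ + ε := by
    rw [inner_add_left, real_inner_smul_left, real_inner_self_eq_norm_sq, hn]; ring
  show ‖w + ε • n‖ * c < ⟪w + ε • n, n⟫
  rw [hinner]
  nlinarith [mul_le_mul_of_nonneg_right hnorm hc0, mul_lt_mul_of_pos_left hc1 hε]

lemma angle_lt_of_norm_mul_cos_lt_inner {v n : V} {φ : ℝ} (hn : ‖n‖ = 1) (hφ0 : 0 ≤ φ)
    (h : ‖v‖ * cos φ < ⟪v, n⟫) : angle v n < φ := by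
  have hv : v ≠ 0 := by rintro rfl; simp at h
  have hcos : cos φ < cos (angle v n) := by
    rw [cos_angle, hn, mul_one, lt_div_iff₀ (norm_pos_iff.mpr hv), mul_comm]
    exact h
  by_contra! hle
  linarith [cos_le_cos_of_nonneg_of_le_pi hφ0 (angle_le_pi v n) hle]

/-- The test vector `w` is `n` rotated by `α` towards `u`, scaled to the length of the component
of `u` orthogonal to `n`, so that it lies on the boundary of the cone even when `u ∥ n`. -/
lemma inner_le_neg_sin_of_forall_inner_nonpos {u n : V} {α : ℝ} (hu : ‖u‖ = 1) (hn : ‖n‖ = 1)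
    (hα : 0 ≤ cos α) (h : ∀ w : V, ‖w‖ * cos α ≤ ⟪w, n⟫ → ⟪u, w⟫ ≤ 0) :
    ⟪u, n⟫ ≤ -sin α := by
  set c := ⟪u, n⟫
  set q := u - c • n
  have hqn : ⟪q, n⟫ = 0 := by
    simp only [q, inner_sub_left, real_inner_smul_left, real_inner_self_eq_norm_sq, hn, c]
    ring
  have hnq : ⟪n, q⟫ = 0 := real_inner_comm q n ▸ hqn
  have huq : ⟪u, q⟫ = ‖q‖ ^ 2 := by
    have : ⟪q, q⟫ = ⟪u, q⟫ - c * ⟪n, q⟫ := by rw [← real_inner_smul_left, ← inner_sub_left]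
    rw [← real_inner_self_eq_norm_sq, this, hnq, mul_zero, sub_zero]
  have hq : ‖q‖ ^ 2 = 1 - c ^ 2 := by
    rw [← huq, inner_sub_right, real_inner_smul_right, real_inner_self_eq_norm_sq, hu]
    ring
  have hc : c ≤ 0 := h n (by rw [real_inner_self_eq_norm_sq, hn]; simpa using cos_le_one α)
  set w := (‖q‖ * cos α) • n + sin α • q
  have hwn : ⟪w, n⟫ = ‖q‖ * cos α := by
    simp only [w, inner_add_left, real_inner_smul_left, real_inner_self_eq_norm_sq, hn, hqn]
    ring
  have hw : ‖w‖ = ‖q‖ := by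
    refine (sq_eq_sq₀ (norm_nonneg _) (norm_nonneg _)).1 ?_
    rw [← real_inner_self_eq_norm_sq]
    simp only [w, inner_add_left, inner_add_right, real_inner_smul_left, real_inner_smul_right,
      hqn, hnq]
    rw [real_inner_self_eq_norm_sq n, real_inner_self_eq_norm_sq q, hn]
    linear_combination ‖q‖ ^ 2 * sin_sq_add_cos_sq α
  have huw : ⟪u, w⟫ = ‖q‖ * (c * cos α + ‖q‖ * sin α) := by
    simp only [w, inner_add_right, real_inner_smul_right, huq]
    ring
  refine le_neg_of_mul_add_mul_nonpos hc (norm_nonneg q) hq hα (sin_sq_add_cos_sq α) ?_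
  rw [← huw]
  exact h w (by rw [hw, hwn])

lemma pi_div_two_add_le_angle_of_forall_inner_nonpos {u n : V} {α : ℝ} (hu : ‖u‖ = 1)
    (hn : ‖n‖ = 1) (hα0 : 0 ≤ α) (hαπ : α ≤ π / 2)
    (h : ∀ w : V, ‖w‖ * cos α ≤ ⟪w, n⟫ → ⟪u, w⟫ ≤ 0) : π / 2 + α ≤ angle u n := by
  have hcos : cos (angle u n) ≤ cos (α + π / 2) := by
    rw [cos_angle, hu, hn, one_mul, div_one, cos_add_pi_div_two]
    exact inner_le_neg_sin_of_forall_inner_nonpos hu hn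
      (cos_nonneg_of_mem_Icc ⟨by linarith [pi_pos], hαπ⟩) h
  by_contra! hlt
  linarith [cos_lt_cos_of_nonneg_of_le_pi (angle_nonneg u n) (by linarith) (add_comm α _ ▸ hlt)]

/-- if x − ξ̄ makes a nonpositive inner product with every vector of the closed
cone of opening θ and axis n, then its normalization makes an inner product
≤ −sin((θ−θ')/2)|v| with every v in the open cone of opening θ' < θ. -/
theorem stmt_4 {n : ℕ} (θ θ' : ℝ) (hθ'pos : 0 < θ') (hθθ : θ' < θ) (hθpi : θ ≤ Real.pi)
    (nvec x ξbar : EuclideanSpace ℝ (Fin n)) (hn : ‖nvec‖ = 1) (hne : x ≠ ξbar)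
    (hyp : ∀ w ∈ closure {h : EuclideanSpace ℝ (Fin n) | ⟪h, nvec⟫ > ‖h‖ * Real.cos (θ / 2)},
      ⟪x - ξbar, w⟫ ≤ 0) :
    ∀ v ∈ {h : EuclideanSpace ℝ (Fin n) | ⟪h, nvec⟫ > ‖h‖ * Real.cos (θ' / 2)},
      ⟪‖x - ξbar‖⁻¹ • (x - ξbar), v⟫ ≤ -Real.sin ((θ - θ') / 2) * ‖v‖ := by
  intro v hv
  set u := ‖x - ξbar‖⁻¹ • (x - ξbar)
  have hu : ‖u‖ = 1 := norm_smul_inv_norm (sub_ne_zero.mpr hne)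
  have hcos_nonneg : 0 ≤ cos (θ / 2) := cos_nonneg_of_mem_Icc ⟨by linarith, by linarith⟩
  have hcos_lt_one : cos (θ / 2) < 1 := by
    simpa using cos_lt_cos_of_nonneg_of_le_pi le_rfl (by linarith) (by linarith : 0 < θ / 2)
  have hdual : ∀ w, ‖w‖ * cos (θ / 2) ≤ ⟪w, nvec⟫ → ⟪u, w⟫ ≤ 0 := fun w hw => by
    rw [real_inner_smul_left]
    exact mul_nonpos_of_nonneg_of_nonpos (by positivity)
      (hyp w (setOf_norm_mul_le_inner_subset_closure hn hcos_nonneg hcos_lt_one hw))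
  have hun : π / 2 + θ / 2 ≤ angle u nvec :=
    pi_div_two_add_le_angle_of_forall_inner_nonpos hu hn (by linarith) (by linarith) hdual
  have hvn : angle v nvec < θ' / 2 :=
    angle_lt_of_norm_mul_cos_lt_inner hn (by linarith) hv
  have huv : (θ - θ') / 2 + π / 2 ≤ angle u v := by
    linarith [angle_le_angle_add_angle u v nvec, angle_comm v nvec]
  calc ⟪u, v⟫ = cos (angle u v) * ‖v‖ := by rw [← cos_angle_mul_norm_mul_norm, hu, one_mul]
    _ ≤ cos ((θ - θ') / 2 + π / 2) * ‖v‖ := by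
      gcongr
      exact cos_le_cos_of_nonneg_of_le_pi (by linarith) (angle_le_pi u v) huv
    _ = -sin ((θ - θ') / 2) * ‖v‖ := by rw [cos_add_pi_div_two]
end

section
/- Let 𝒯 ⊂ ℝⁿ be closed and let ℱ be a family of vector fields on ℝⁿ that is uniformly locally Lipschitz and uniformly linearly bounded (|f(x)| ≤ C(|x|+1) for all f ∈ ℱ). Let T be the minimum time function to reach 𝒯 by concatenations of integral curves of fields in ℱ, and ℛ = { x : T(x) < ∞ }. Suppose there is a modulus ω and for each x₀ ∈ ∂𝒯 a neighborhood W and constant C₀ with T(z) ≤ C₀ ω(d(z, 𝒯)) for all z ∈ W. Then ℛ is open, and for every bounded V with closure contained in ℛ there exist constants C, C₁ ≥ 0 and β > 0 such that |T(z₁) − T(z₂)| ≤ C ω(C₁ |z₁ − z₂|) for all z₁, z₂ ∈ V with |z₁ − z₂| ≤ β. -/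
/-!
Along a trajectory reaching the target from `x` in time at most `Tm`, linear growth keeps
everything inside a fixed ball, on which all fields share a Lipschitz constant `K`. Truncating the
fields outside the ball by the (2-Lipschitz) radial retraction makes them globally Lipschitz and
bounded, so from any `x'` near `x` the same fields can be followed for the same times; by Gronwall
the new trajectory stays within `e^{2K Tm} |x' - x|` of the old one, hence inside the ball, where
the truncation is invisible. Its endpoint is then close to the target, where the boundary
hypothesis, made uniform by compactness of the bounded part of `∂𝒯` (the nearest point of `𝒯` to
a point outside lies on `∂𝒯`), yields `T(x') ≤ T(x) + C₀ ω(C₁ |x' - x|)`. This makes `T` locally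
bounded on `ℛ`, so `ℛ` is open and `T` is bounded on the compact set `closure V`, and the estimate
applied in both directions is the claimed modulus of continuity.
-/

open Metric Set Filter
open scoped ENNReal Topology

/-- Reachability relation for a family `F` of vector fields: `Reach F x t z` holds iff there
is a concatenation of integral curves of fields in `F`, of total duration `t ≥ 0`,
going from `x` to `z`. -/
inductive Reach {n : ℕ} (F : Set (EuclideanSpace ℝ (Fin n) → EuclideanSpace ℝ (Fin n))) :
    EuclideanSpace ℝ (Fin n) → ℝ → EuclideanSpace ℝ (Fin n) → Prop
  | refl (x : EuclideanSpace ℝ (Fin n)) : Reach F x 0 x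
  | step {x z w : EuclideanSpace ℝ (Fin n)} {t s : ℝ} (h : Reach F x t z)
      {f : EuclideanSpace ℝ (Fin n) → EuclideanSpace ℝ (Fin n)} (hf : f ∈ F) (hs : 0 ≤ s)
      (y : ℝ → EuclideanSpace ℝ (Fin n)) (h0 : y 0 = z)
      (hy : ∀ u ∈ Set.Icc (0 : ℝ) s, HasDerivAt y (f (y u)) u)
      (hw : y s = w) : Reach F x (t + s) w

/-- The minimum time function to reach the target `T` by `F`-trajectories (`+∞` if
the target cannot be reached). -/
noncomputable def minTime {n : ℕ}
    (F : Set (EuclideanSpace ℝ (Fin n) → EuclideanSpace ℝ (Fin n)))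
    (T : Set (EuclideanSpace ℝ (Fin n))) (x : EuclideanSpace ℝ (Fin n)) : ℝ≥0∞ :=
  sInf (ENNReal.ofReal '' {r : ℝ | 0 ≤ r ∧ ∃ z ∈ T, Reach F x r z})

/-- A modulus: nonnegative, nondecreasing, with ω(0+) = 0. -/
def IsModulus (ω : ℝ → ℝ) : Prop :=
  (∀ r, 0 ≤ ω r) ∧ Monotone ω ∧ Tendsto ω (𝓝[>] (0 : ℝ)) (𝓝 0)

/-- Uniform local Lipschitz continuity of a family of vector fields. -/
def UnifLocLipschitz {n : ℕ}
    (F : Set (EuclideanSpace ℝ (Fin n) → EuclideanSpace ℝ (Fin n))) : Prop :=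
  ∀ K : Set (EuclideanSpace ℝ (Fin n)), Bornology.IsBounded K →
    ∃ L : NNReal, ∀ f ∈ F, LipschitzOnWith L f K

/-- Uniform linear growth bound for a family of vector fields. -/
def UnifLinBounded {n : ℕ}
    (F : Set (EuclideanSpace ℝ (Fin n) → EuclideanSpace ℝ (Fin n))) : Prop :=
  ∃ C : ℝ, 0 ≤ C ∧ ∀ f ∈ F, ∀ x, ‖f x‖ ≤ C * (‖x‖ + 1)

open Real
open scoped NNReal

section RadialRetraction

variable {E : Type*} [NormedAddCommGroup E] [NormedSpace ℝ E]

noncomputable def radialRetraction (R : ℝ) (x : E) : E := (R / max ‖x‖ R) • x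

variable {R : ℝ}

theorem radialRetraction_of_norm_le (hR : 0 < R) {x : E} (hx : ‖x‖ ≤ R) :
    radialRetraction R x = x := by
  rw [radialRetraction, max_eq_right hx, div_self hR.ne', one_smul]

theorem norm_radialRetraction_le (hR : 0 < R) (x : E) : ‖radialRetraction R x‖ ≤ R := by
  have hmax : 0 < max ‖x‖ R := lt_max_of_lt_right hR
  rw [radialRetraction, norm_smul, Real.norm_of_nonneg (div_nonneg hR.le hmax.le),
    div_mul_eq_mul_div, div_le_iff₀ hmax]
  exact mul_le_mul_of_nonneg_left (le_max_left _ _) hR.le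

theorem lipschitzWith_radialRetraction (hR : 0 < R) :
    LipschitzWith 2 (radialRetraction (E := E) R) := by
  refine LipschitzWith.of_dist_le_mul fun x y => ?_
  wlog hyx : ‖y‖ ≤ ‖x‖ generalizing x y
  · rw [dist_comm, dist_comm x]
    exact this y x (le_of_not_ge hyx)
  set c : E → ℝ := fun z => R / max ‖z‖ R
  have hmax : ∀ z : E, 0 < max ‖z‖ R := fun z => lt_max_of_lt_right hR
  have hcx : 0 ≤ c x := div_nonneg hR.le (hmax x).le
  have hcx1 : c x ≤ 1 := div_le_one_of_le₀ (le_max_right _ _) (hmax x).le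
  have hcxy : c x ≤ c y :=
    div_le_div_of_nonneg_left hR.le (hmax y) (max_le_max_right R hyx)
  have hcn_eq : ∀ z : E, c z * ‖z‖ = min ‖z‖ R := fun z => by
    rcases le_total ‖z‖ R with h | h
    · simp only [c, max_eq_right h, min_eq_left h, div_self hR.ne', one_mul]
    · simp only [c, max_eq_left h, min_eq_right h]
      exact div_mul_cancel₀ R (hR.trans_le h).ne'
  have hcn : c y * ‖y‖ ≤ c x * ‖x‖ := by
    rw [hcn_eq, hcn_eq]; exact min_le_min_right R hyx
  have hsplit : radialRetraction R x - radialRetraction R y = c x • (x - y) - (c y - c x) • y := by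
    simp only [radialRetraction, c, smul_sub, sub_smul]; abel
  rw [dist_eq_norm, dist_eq_norm, hsplit]
  calc ‖c x • (x - y) - (c y - c x) • y‖
      ≤ c x * ‖x - y‖ + (c y - c x) * ‖y‖ := by
        refine (norm_sub_le _ _).trans (le_of_eq ?_)
        rw [norm_smul, norm_smul, Real.norm_of_nonneg hcx, Real.norm_of_nonneg (by linarith)]
    _ ≤ c x * (‖x - y‖ + (‖x‖ - ‖y‖)) := by nlinarith
    _ ≤ 2 * ‖x - y‖ := by nlinarith [norm_sub_norm_le x y, norm_nonneg (x - y)]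

end RadialRetraction

section IntegralCurves

variable {E : Type*} [NormedAddCommGroup E] [NormedSpace ℝ E]

theorem norm_add_one_le_of_hasDerivAt {f : E → E} {C s : ℝ} (hC : 0 < C)
    (hf : ∀ x, ‖f x‖ ≤ C * (‖x‖ + 1)) {y : ℝ → E}
    (hy : ∀ u ∈ Icc (0 : ℝ) s, HasDerivAt y (f (y u)) u) {u : ℝ} (hu : u ∈ Icc (0 : ℝ) s) :
    ‖y u‖ + 1 ≤ (‖y 0‖ + 1) * exp (C * u) := by
  have hgron := norm_le_gronwallBound_of_norm_deriv_right_le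
    (fun v hv => (hy v hv).continuousAt.continuousWithinAt)
    (fun v hv => (hy v (Ico_subset_Icc_self hv)).hasDerivWithinAt) le_rfl
    (fun v _ => (hf (y v)).trans_eq (mul_add_one C ‖y v‖)) u hu
  rw [gronwallBound_of_K_ne_0 hC.ne', div_self hC.ne', sub_zero] at hgron
  linarith

variable [CompleteSpace E]

theorem exists_forall_hasDerivAt_of_lipschitzWith {g : E → E} {K : ℝ≥0} (hg : LipschitzWith K g)
    {M : ℝ} (hM : ∀ x, ‖g x‖ ≤ M) (x₀ : E) (s : ℝ) :
    ∃ z : ℝ → E, z 0 = x₀ ∧ ∀ u ∈ Icc (0 : ℝ) s, HasDerivAt z (g (z u)) u := by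
  have hpl : IsPicardLindelof (fun _ => g) (tmin := -1) (tmax := |s| + 1)
      ⟨0, by constructor <;> linarith [abs_nonneg s]⟩ x₀ (M.toNNReal * (|s| + 1).toNNReal) 0
      M.toNNReal K := by
    refine IsPicardLindelof.of_time_independent (fun x _ => (hM x).trans M.le_coe_toNNReal)
      hg.lipschitzOnWith ?_
    simp
  obtain ⟨z, hz0, hz⟩ := hpl.exists_eq_forall_mem_Icc_hasDerivWithinAt₀
  refine ⟨z, hz0, fun u hu => (hz u ⟨?_, ?_⟩).hasDerivAt (Icc_mem_nhds ?_ ?_)⟩ <;>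
    linarith [hu.1, hu.2, le_abs_self s]

theorem exists_hasDerivAt_dist_le_of_lipschitzOnWith {f : E → E} {K : ℝ≥0} {B s : ℝ}
    (hs : 0 ≤ s) (hK : LipschitzOnWith K f (closedBall 0 (B + 1))) {y : ℝ → E}
    (hy : ∀ u ∈ Icc (0 : ℝ) s, HasDerivAt y (f (y u)) u) (hyB : ∀ u ∈ Icc (0 : ℝ) s, ‖y u‖ ≤ B)
    {x : E} (hx : dist x (y 0) * exp (2 * K * s) ≤ 1) :
    ∃ z : ℝ → E, z 0 = x ∧ (∀ u ∈ Icc (0 : ℝ) s, HasDerivAt z (f (z u)) u) ∧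
      dist (z s) (y s) ≤ dist x (y 0) * exp (2 * K * s) := by
  have hR : 0 < B + 1 := by linarith [(norm_nonneg _).trans (hyB 0 ⟨le_rfl, hs⟩)]
  set g := f ∘ radialRetraction (B + 1)
  have hmaps : ∀ x : E, radialRetraction (B + 1) x ∈ closedBall 0 (B + 1) := fun x =>
    mem_closedBall_zero_iff.2 (norm_radialRetraction_le hR x)
  have hg : LipschitzWith (K * 2) g := lipschitzOnWith_univ.mp <|
    hK.comp (lipschitzWith_radialRetraction hR).lipschitzOnWith fun x _ => hmaps x
  have hgM : ∀ x, ‖g x‖ ≤ ‖f 0‖ + K * (B + 1) := fun x => by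
    have hdist : dist (g x) (f 0) ≤ K * (B + 1) :=
      (hK.dist_le_mul _ (hmaps x) 0 (mem_closedBall_self hR.le)).trans <| by
        rw [dist_zero_right]; gcongr; exact mem_closedBall_zero_iff.1 (hmaps x)
    linarith [norm_le_norm_add_norm_sub' (g x) (f 0), dist_eq_norm (g x) (f 0)]
  have hgf : ∀ x : E, ‖x‖ ≤ B + 1 → g x = f x := fun x hx => by
    simp only [g, Function.comp_apply, radialRetraction_of_norm_le hR hx]
  obtain ⟨z, hz0, hz⟩ := exists_forall_hasDerivAt_of_lipschitzWith hg hgM x s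
  have hyg : ∀ u ∈ Icc (0 : ℝ) s, HasDerivAt y (g (y u)) u := fun u hu => by
    rw [hgf _ ((hyB u hu).trans (by linarith))]; exact hy u hu
  have hdist : ∀ u ∈ Icc (0 : ℝ) s, dist (z u) (y u) ≤ dist x (y 0) * exp (2 * K * u) := by
    intro u hu
    have := dist_le_of_trajectories_ODE (v := fun _ => g) (fun _ => hg)
      (fun v hv => (hz v hv).continuousAt.continuousWithinAt)
      (fun v hv => (hz v (Ico_subset_Icc_self hv)).hasDerivWithinAt)
      (fun v hv => (hyg v hv).continuousAt.continuousWithinAt)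
      (fun v hv => (hyg v (Ico_subset_Icc_self hv)).hasDerivWithinAt)
      (le_of_eq (by rw [hz0])) u hu
    simpa [mul_comm (K : ℝ) 2] using this
  have hzB : ∀ u ∈ Icc (0 : ℝ) s, ‖z u‖ ≤ B + 1 := fun u hu => by
    have hexp : exp (2 * K * u) ≤ exp (2 * K * s) := exp_le_exp.2 (by gcongr; exact hu.2)
    have := norm_le_norm_add_norm_sub' (z u) (y u)
    rw [← dist_eq_norm] at this
    nlinarith [hdist u hu, hyB u hu, dist_nonneg (x := x) (y := y 0)]
  exact ⟨z, hz0, fun u hu => hgf _ (hzB u hu) ▸ hz u hu, hdist s ⟨hs, le_rfl⟩⟩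

end IntegralCurves

theorem IsCompact.exists_eventually_nhdsSet {X : Type*} [TopologicalSpace X] {K : Set X}
    (hK : IsCompact K) {P : ℝ → X → Prop} (hP : ∀ ⦃a b⦄, a ≤ b → ∀ x, P a x → P b x)
    (h : ∀ x ∈ K, ∃ a, ∀ᶠ z in 𝓝 x, P a z) : ∃ a, ∀ᶠ z in 𝓝ˢ K, P a z := by
  refine hK.induction_on ⟨0, by simp⟩
    (fun s t hst ⟨a, ha⟩ => ⟨a, ha.filter_mono (nhdsSet_mono hst)⟩)
    (fun s t ⟨a, ha⟩ ⟨b, hb⟩ => ⟨max a b, ?_⟩) (fun x hx => ?_)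
  · rw [nhdsSet_union, eventually_sup]
    exact ⟨ha.mono (hP (le_max_left a b)), hb.mono (hP (le_max_right a b))⟩
  · obtain ⟨a, ha⟩ := h x hx
    obtain ⟨U, hU, hUo, hxU⟩ := eventually_nhds_iff.1 ha
    exact ⟨U, mem_nhdsWithin_of_mem_nhds (hUo.mem_nhds hxU), a, by rwa [hUo.nhdsSet_eq]⟩

theorem abs_toReal_sub_toReal_le {a b : ℝ≥0∞} (ha : a ≠ ⊤) (hb : b ≠ ⊤) {c : ℝ} (hc : 0 ≤ c)
    (hab : a ≤ b + ENNReal.ofReal c) (hba : b ≤ a + ENNReal.ofReal c) :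
    |a.toReal - b.toReal| ≤ c := by
  have key : ∀ {a b : ℝ≥0∞}, b ≠ ⊤ → a ≤ b + ENNReal.ofReal c → a.toReal ≤ b.toReal + c :=
    fun hb h => by
      simpa [ENNReal.toReal_add hb ENNReal.ofReal_ne_top, hc] using
        ENNReal.toReal_mono (ENNReal.add_ne_top.2 ⟨hb, ENNReal.ofReal_ne_top⟩) h
  rw [abs_sub_le_iff]
  constructor <;> linarith [key hb hab, key ha hba]

section MinimumTime

variable {n : ℕ} {F : Set (EuclideanSpace ℝ (Fin n) → EuclideanSpace ℝ (Fin n))}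
  {T : Set (EuclideanSpace ℝ (Fin n))}

local notation "ℝⁿ" => EuclideanSpace ℝ (Fin n)

theorem Reach.nonneg {x z : ℝⁿ} {t : ℝ} (h : Reach F x t z) : 0 ≤ t := by
  induction h with
  | refl => exact le_rfl
  | step _ _ hs _ _ _ _ ih => exact add_nonneg ih hs

theorem Reach.trans {x z w : ℝⁿ} {t s : ℝ} (h₁ : Reach F x t z) (h₂ : Reach F z s w) :
    Reach F x (t + s) w := by
  induction h₂ with
  | refl => simpa using h₁
  | step _ hf hs y h0 hy hw ih => simpa [add_assoc] using ih.step hf hs y h0 hy hw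

section LinearGrowth

variable {C : ℝ} (hC : 0 < C) (hF : ∀ f ∈ F, ∀ x, ‖f x‖ ≤ C * (‖x‖ + 1))
include hC hF

theorem Reach.norm_add_one_le {x z : ℝⁿ} {t : ℝ} (h : Reach F x t z) :
    ‖z‖ + 1 ≤ (‖x‖ + 1) * exp (C * t) := by
  induction h with
  | refl => simp
  | @step z w t s h f hf hs y h0 hy hw ih =>
    have hpiece := norm_add_one_le_of_hasDerivAt hC (hF f hf) hy ⟨hs, le_rfl⟩
    rw [h0, hw] at hpiece
    calc ‖w‖ + 1 ≤ (‖z‖ + 1) * exp (C * s) := hpiece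
      _ ≤ (‖x‖ + 1) * exp (C * t) * exp (C * s) := by gcongr
      _ = (‖x‖ + 1) * exp (C * (t + s)) := by rw [mul_assoc, ← exp_add, mul_add]

theorem Reach.exists_reach_dist_le {B : ℝ} {K : ℝ≥0}
    (hK : ∀ f ∈ F, LipschitzOnWith K f (closedBall 0 (B + 1))) {x z : ℝⁿ} {t : ℝ}
    (h : Reach F x t z) (hxt : (‖x‖ + 1) * exp (C * t) ≤ B + 1) {x' : ℝⁿ}
    (hx' : dist x' x * exp (2 * K * t) ≤ 1) :
    ∃ z', Reach F x' t z' ∧ dist z' z ≤ dist x' x * exp (2 * K * t) := by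
  induction h generalizing x' with
  | refl => exact ⟨x', Reach.refl x', by simp⟩
  | @step z w t s h f hf hs y h0 hy hw ih =>
    have hexp : ∀ a : ℝ, exp (a * (t + s)) = exp (a * t) * exp (a * s) := fun a => by
      rw [← exp_add, mul_add]
    have hxt' : (‖x‖ + 1) * exp (C * t) ≤ B + 1 := le_trans (by gcongr; linarith) hxt
    obtain ⟨z', hz'reach, hz'⟩ := ih hxt' <| le_trans (by gcongr; linarith) hx'
    have hyB : ∀ u ∈ Icc (0 : ℝ) s, ‖y u‖ ≤ B := fun u hu => by
      have hpiece := norm_add_one_le_of_hasDerivAt hC (hF f hf) hy hu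
      rw [h0] at hpiece
      have : (‖z‖ + 1) * exp (C * u) ≤ (‖x‖ + 1) * exp (C * (t + s)) := by
        rw [hexp, ← mul_assoc]
        gcongr
        exacts [h.norm_add_one_le hC hF, hu.2]
      linarith
    have hstart : dist z' (y 0) * exp (2 * K * s) ≤ dist x' x * exp (2 * K * (t + s)) := by
      rw [h0, hexp, ← mul_assoc]; gcongr
    obtain ⟨y', hy'0, hy', hy's⟩ :=
      exists_hasDerivAt_dist_le_of_lipschitzOnWith hs (hK f hf) hy hyB (hstart.trans hx')
    refine ⟨y' s, hz'reach.step hf hs y' hy'0 hy' rfl, ?_⟩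
    rw [← hw]
    exact hy's.trans hstart

end LinearGrowth

theorem minTime_le_ofReal {x z : ℝⁿ} {r : ℝ} (hz : z ∈ T) (h : Reach F x r z) :
    minTime F T x ≤ ENNReal.ofReal r :=
  sInf_le ⟨r, ⟨h.nonneg, z, hz, h⟩, rfl⟩

theorem minTime_eq_zero_of_mem {x : ℝⁿ} (hx : x ∈ T) : minTime F T x = 0 :=
  nonpos_iff_eq_zero.1 <| by simpa using minTime_le_ofReal (F := F) hx (Reach.refl x)

theorem Reach.minTime_le_add {x z : ℝⁿ} {t : ℝ} (h : Reach F x t z) :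
    minTime F T x ≤ ENNReal.ofReal t + minTime F T z := by
  rw [add_comm, minTime.eq_1 F T z, ENNReal.sInf_add]
  refine le_iInf₂ ?_
  rintro _ ⟨r, ⟨hr, w, hw, hzw⟩, rfl⟩
  rw [← ENNReal.ofReal_add hr h.nonneg, add_comm]
  exact minTime_le_ofReal hw (h.trans hzw)

theorem minTime_le_add_of_forall_reach {x x' : ℝⁿ} {Tm : ℝ} {c : ℝ≥0∞}
    (hx : minTime F T x < ENNReal.ofReal Tm)
    (h : ∀ r z, r < Tm → z ∈ T → Reach F x r z → minTime F T x' ≤ ENNReal.ofReal r + c) :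
    minTime F T x' ≤ minTime F T x + c := by
  refine ENNReal.le_of_forall_pos_le_add fun ε hε _ => ?_
  have hlt : minTime F T x < min (minTime F T x + ε) (ENNReal.ofReal Tm) :=
    lt_min (ENNReal.lt_add_right hx.ne_top (by simpa using hε.ne')) hx
  obtain ⟨_, ⟨r, ⟨-, z, hz, hreach⟩, rfl⟩, hr⟩ := sInf_lt_iff.1 hlt
  calc minTime F T x' ≤ ENNReal.ofReal r + c :=
        h r z (ENNReal.ofReal_lt_ofReal_iff'.1 (hr.trans_le (min_le_right _ _))).1 hz hreach
    _ ≤ minTime F T x + ε + c := by gcongr; exact (hr.trans_le (min_le_left _ _)).le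
    _ = minTime F T x + c + ε := add_right_comm _ _ _

theorem exists_minTime_le_near_target {ω : ℝ → ℝ} (hω : IsModulus ω)
    (hbnd : ∀ x₀ ∈ frontier T, ∃ W ∈ 𝓝 x₀, ∃ C₀ : ℝ, 0 ≤ C₀ ∧
      ∀ z ∈ W, minTime F T z ≠ ⊤ ∧ (minTime F T z).toReal ≤ C₀ * ω (infDist z T)) (R : ℝ) :
    ∃ η > 0, ∃ C₀ : ℝ, 0 ≤ C₀ ∧ ∀ p ∈ T, ‖p‖ ≤ R → ∀ z, dist z p < η →
      minTime F T z ≤ ENNReal.ofReal (C₀ * ω (infDist z T)) := by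
  set P : ℝ → ℝⁿ → Prop := fun a z => minTime F T z ≤ ENNReal.ofReal (a * ω (infDist z T))
  have hP : ∀ ⦃a b⦄, a ≤ b → ∀ z, P a z → P b z := fun a b hab z hz =>
    hz.trans (ENNReal.ofReal_le_ofReal (mul_le_mul_of_nonneg_right hab (hω.1 _)))
  set K := frontier T ∩ closedBall 0 (R + 2)
  have hK : IsCompact K := (isCompact_closedBall _ _).inter_left isClosed_frontier
  obtain ⟨a, ha⟩ := hK.exists_eventually_nhdsSet hP fun x₀ hx₀ => by
    obtain ⟨W, hW, C₀, hC₀, hW'⟩ := hbnd x₀ hx₀.1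
    refine ⟨C₀, Filter.mem_of_superset hW fun z hz => ?_⟩
    exact (ENNReal.le_ofReal_iff_toReal_le (hW' z hz).1 (mul_nonneg hC₀ (hω.1 _))).2 (hW' z hz).2
  obtain ⟨U, hUo, hKU, hU⟩ := mem_nhdsSet_iff_exists.1 ha
  obtain ⟨ε, hε, hεU⟩ := hK.exists_thickening_subset_open hUo hKU
  refine ⟨min ε 1, lt_min hε one_pos, max a 0, le_max_right _ _, fun p hp hpR z hzp => ?_⟩
  by_cases hzT : z ∈ T
  · rw [minTime_eq_zero_of_mem hzT]; exact zero_le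
  obtain ⟨q, hq, hzq⟩ := exists_mem_frontier_infDist_compl_eq_dist (s := Tᶜ) hzT
    fun h => (eq_univ_iff_forall.1 h p) hp
  rw [compl_compl] at hzq
  rw [frontier_compl] at hq
  have hdq : dist z q < min ε 1 := hzq ▸ (infDist_le_dist_of_mem hp).trans_lt hzp
  have hqK : q ∈ K := by
    refine ⟨hq, mem_closedBall_zero_iff.2 ?_⟩
    have := dist_triangle4 q z p 0
    rw [dist_zero_right, dist_zero_right, dist_comm q] at this
    linarith [min_le_right ε 1]
  exact hP (le_max_left a 0) z
    (hU (hεU (mem_thickening_iff.2 ⟨q, hqK, hdq.trans_le (min_le_left _ _)⟩)))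

section Estimate

variable {ω : ℝ → ℝ} (hLip : UnifLocLipschitz F) (hLin : UnifLinBounded F) (hω : IsModulus ω)
  (hbnd : ∀ x₀ ∈ frontier T, ∃ W ∈ 𝓝 x₀, ∃ C₀ : ℝ, 0 ≤ C₀ ∧
    ∀ z ∈ W, minTime F T z ≠ ⊤ ∧ (minTime F T z).toReal ≤ C₀ * ω (infDist z T))
include hLip hLin hω hbnd

theorem exists_minTime_le_add_modulus (R Tm : ℝ) :
    ∃ δ > 0, ∃ C₀ C₁ : ℝ, 0 ≤ C₀ ∧ 0 ≤ C₁ ∧ ∀ x x' : ℝⁿ, ‖x‖ ≤ R →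
      minTime F T x < ENNReal.ofReal Tm → dist x' x ≤ δ →
      minTime F T x' ≤ minTime F T x + ENNReal.ofReal (C₀ * ω (C₁ * dist x' x)) := by
  obtain ⟨C, hC, hF⟩ := hLin
  have hF' : ∀ f ∈ F, ∀ x, ‖f x‖ ≤ (C + 1) * (‖x‖ + 1) := fun f hf x =>
    (hF f hf x).trans (by gcongr; linarith)
  set B := (max R 0 + 1) * exp ((C + 1) * max Tm 0)
  obtain ⟨K, hK⟩ := hLip (closedBall 0 (B + 1)) isBounded_closedBall
  obtain ⟨η, hη, C₀, hC₀, hnear⟩ := exists_minTime_le_near_target hω hbnd B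
  set C₁ := exp (2 * K * max Tm 0)
  refine ⟨min (η / 2) 1 / C₁, by positivity, C₀, C₁, hC₀, by positivity,
    fun x x' hxR hx hx' => minTime_le_add_of_forall_reach hx fun r z hr hz hreach => ?_⟩
  have hr0 : 0 ≤ r := hreach.nonneg
  have hxt : (‖x‖ + 1) * exp ((C + 1) * r) ≤ B := by
    change _ ≤ (max R 0 + 1) * exp ((C + 1) * max Tm 0)
    gcongr
    exacts [le_max_of_le_left hxR, le_max_of_le_left hr.le]
  have hC₁r : exp (2 * K * r) ≤ C₁ := exp_le_exp.2 (by gcongr; exact le_max_of_le_left hr.le)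
  have hx'C₁ : dist x' x * exp (2 * K * r) ≤ min (η / 2) 1 := by
    calc dist x' x * exp (2 * K * r) ≤ min (η / 2) 1 / C₁ * C₁ := by gcongr
      _ = min (η / 2) 1 := div_mul_cancel₀ _ (exp_pos _).ne'
  obtain ⟨z', hz'reach, hz'⟩ := hreach.exists_reach_dist_le (by linarith) hF' hK
    (by linarith) (hx'C₁.trans (min_le_right _ _))
  have hzB : ‖z‖ ≤ B := by linarith [hreach.norm_add_one_le (by linarith) hF']
  have hz'z : dist z' z ≤ C₁ * dist x' x := hz'.trans <| by rw [mul_comm]; gcongr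
  have hz'T := hnear z hz hzB z' <| by
    linarith [hz'.trans hx'C₁, min_le_left (η / 2) 1]
  calc minTime F T x' ≤ ENNReal.ofReal r + minTime F T z' := hz'reach.minTime_le_add
    _ ≤ ENNReal.ofReal r + ENNReal.ofReal (C₀ * ω (C₁ * dist x' x)) := by
      gcongr
      refine hz'T.trans (ENNReal.ofReal_le_ofReal (mul_le_mul_of_nonneg_left (hω.2.1 ?_) hC₀))
      exact (infDist_le_dist_of_mem hz).trans hz'z

theorem eventually_minTime_lt {x : ℝⁿ} (hx : minTime F T x ≠ ⊤) :
    ∃ a, ∀ᶠ x' in 𝓝 x, minTime F T x' < ENNReal.ofReal a := by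
  set m := (minTime F T x).toReal
  obtain ⟨δ, hδ, C₀, C₁, hC₀, hC₁, hest⟩ :=
    exists_minTime_le_add_modulus hLip hLin hω hbnd ‖x‖ (m + 1)
  have hlt : minTime F T x < ENNReal.ofReal (m + 1) :=
    (ENNReal.lt_ofReal_iff_toReal_lt hx).2 (lt_add_one m)
  refine ⟨m + 1 + C₀ * ω (C₁ * δ), ?_⟩
  filter_upwards [closedBall_mem_nhds x hδ] with x' hx'
  calc minTime F T x' ≤ minTime F T x + ENNReal.ofReal (C₀ * ω (C₁ * dist x' x)) :=
        hest x x' le_rfl hlt hx'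
    _ < ENNReal.ofReal (m + 1) + ENNReal.ofReal (C₀ * ω (C₁ * δ)) :=
      ENNReal.add_lt_add_of_lt_of_le ENNReal.ofReal_ne_top hlt <|
        ENNReal.ofReal_le_ofReal (mul_le_mul_of_nonneg_left (hω.2.1 (by gcongr; exact hx')) hC₀)
    _ = ENNReal.ofReal (m + 1 + C₀ * ω (C₁ * δ)) :=
      (ENNReal.ofReal_add (by positivity) (mul_nonneg hC₀ (hω.1 _))).symm

end Estimate

end MinimumTime

theorem stmt_6_general {n : ℕ} (F : Set (EuclideanSpace ℝ (Fin n) → EuclideanSpace ℝ (Fin n)))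
    (T : Set (EuclideanSpace ℝ (Fin n)))
    (hLip : UnifLocLipschitz F) (hLin : UnifLinBounded F)
    (ω : ℝ → ℝ) (hω : IsModulus ω)
    (hbnd : ∀ x₀ ∈ frontier T, ∃ W ∈ 𝓝 x₀, ∃ C₀ : ℝ, 0 ≤ C₀ ∧
      ∀ z ∈ W, minTime F T z ≠ ⊤ ∧
        (minTime F T z).toReal ≤ C₀ * ω (infDist z T)) :
    IsOpen {x | minTime F T x ≠ ⊤} ∧
    ∀ V : Set (EuclideanSpace ℝ (Fin n)), Bornology.IsBounded V →
      closure V ⊆ {x | minTime F T x ≠ ⊤} →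
      ∃ C C₁ : ℝ, 0 ≤ C ∧ 0 ≤ C₁ ∧ ∃ β > (0 : ℝ), ∀ z₁ ∈ V, ∀ z₂ ∈ V, ‖z₁ - z₂‖ ≤ β →
        |(minTime F T z₁).toReal - (minTime F T z₂).toReal| ≤ C * ω (C₁ * ‖z₁ - z₂‖) := by
  have hloc := fun x (hx : minTime F T x ≠ ⊤) => eventually_minTime_lt hLip hLin hω hbnd hx
  refine ⟨isOpen_iff_mem_nhds.2 fun x hx => ?_, fun V hV hVR => ?_⟩
  · obtain ⟨a, ha⟩ := hloc x hx
    exact ha.mono fun x' hx' => hx'.ne_top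
  obtain ⟨Tm, hTm⟩ := hV.isCompact_closure.exists_eventually_nhdsSet
    (P := fun a x => minTime F T x < ENNReal.ofReal a)
    (fun a b hab x h => h.trans_le (ENNReal.ofReal_le_ofReal hab)) fun x hx => hloc x (hVR hx)
  have hV_lt : ∀ z ∈ V, minTime F T z < ENNReal.ofReal Tm := fun z hz =>
    hTm.self_of_nhdsSet z (subset_closure hz)
  obtain ⟨R, hR⟩ := hV.subset_closedBall 0
  obtain ⟨δ, hδ, C₀, C₁, hC₀, hC₁, hest⟩ := exists_minTime_le_add_modulus hLip hLin hω hbnd R Tm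
  refine ⟨C₀, C₁, hC₀, hC₁, δ, hδ, fun z₁ h₁ z₂ h₂ hd => ?_⟩
  have hest' : ∀ {z z'}, z ∈ V → dist z' z ≤ δ →
      minTime F T z' ≤ minTime F T z + ENNReal.ofReal (C₀ * ω (C₁ * dist z' z)) :=
    fun hz hd => hest _ _ (mem_closedBall_zero_iff.1 (hR hz)) (hV_lt _ hz) hd
  rw [← dist_eq_norm] at hd ⊢
  exact abs_toReal_sub_toReal_le (hV_lt z₁ h₁).ne_top (hV_lt z₂ h₂).ne_top
    (mul_nonneg hC₀ (hω.1 _)) (hest' h₂ hd) (dist_comm z₁ z₂ ▸ hest' h₁ (dist_comm z₁ z₂ ▸ hd))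

/-- propagation of regularity: if the minimum time to reach the closed target 𝒯
satisfies T(z) ≤ C₀ ω(d(z,𝒯)) near every boundary point of 𝒯, for a modulus ω, then the
controllable set ℛ is open and T has, on each bounded V with closure in ℛ, the modulus of
continuity C ω(C₁ |z₁−z₂|) for |z₁−z₂| ≤ β. -/
theorem stmt_6 {n : ℕ} (F : Set (EuclideanSpace ℝ (Fin n) → EuclideanSpace ℝ (Fin n)))
    (T : Set (EuclideanSpace ℝ (Fin n))) (hTcl : IsClosed T)
    (hLip : UnifLocLipschitz F) (hLin : UnifLinBounded F)
    (ω : ℝ → ℝ) (hω : IsModulus ω)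
    (hbnd : ∀ x₀ ∈ frontier T, ∃ W ∈ 𝓝 x₀, ∃ C₀ : ℝ, 0 ≤ C₀ ∧
      ∀ z ∈ W, minTime F T z ≠ ⊤ ∧
        (minTime F T z).toReal ≤ C₀ * ω (infDist z T)) :
    IsOpen {x | minTime F T x ≠ ⊤} ∧
    ∀ V : Set (EuclideanSpace ℝ (Fin n)), Bornology.IsBounded V →
      closure V ⊆ {x | minTime F T x ≠ ⊤} →
      ∃ C C₁ : ℝ, 0 ≤ C ∧ 0 ≤ C₁ ∧ ∃ β > (0 : ℝ), ∀ z₁ ∈ V, ∀ z₂ ∈ V, ‖z₁ - z₂‖ ≤ β →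
        |(minTime F T z₁).toReal - (minTime F T z₂).toReal| ≤ C * ω (C₁ * ‖z₁ - z₂‖) :=
  stmt_6_general F T hLip hLin ω hω hbnd
end
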